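/- Uniqueness and positivity of the first-order candidate for Version 2 (Lemma on ĥ₂): under the hypotheses of the Version 2 theorem (1 − τρ̄′(x)x > 0 for all x, h₂ one-to-one), the functions x ↦ h₂(F⁻¹(x)) and ĥ₂(x) := −F⁻¹(X₀ − N[x − F(ā(F⁻¹(x))·F⁻¹(x))]) are both strictly increasing on ℝ. Consequently the equation F⁻¹(X₀ − N[ξ₀ − F(ā(F⁻¹(ξ₀))·F⁻¹(ξ₀))]) = h₂(F⁻¹(ξ₀)) has at most one solution ξ₀, and any solution is strictly positive. -/

import Mathlib

/-!
The denominator of `h₂` is the derivative of `G(u) = F(u) − F(ā(u)u)`. It is positive at `0`,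
and it cannot vanish elsewhere since `h₂` would then vanish there as it does at `0`, contradicting
injectivity; by continuity it is positive everywhere. The numerator exceeds it because `ā < 1`, so
`h₂(x)` has the sign of `x`, and a continuous injective map with this sign pattern is increasing.
As `F⁻¹` and `G` are increasing, so is `ĥ₂ = −F⁻¹(X₀ − N G(F⁻¹(·)))`. A solution `ξ₀` is a zero
of the strictly increasing `h₂ ∘ F⁻¹ + ĥ₂`, hence unique; and if `ξ₀ ≤ 0` then
`G(F⁻¹ ξ₀) ≤ G(0) = 0`, making the left side positive and the right side `h₂(F⁻¹ ξ₀) ≤ 0`.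
-/

open Real Filter

/-- `Fi f x = F(x) = ∫₀ˣ f(y) dy`. -/
noncomputable def Fi (f : ℝ → ℝ) (x : ℝ) : ℝ := ∫ y in (0:ℝ)..x, f y

/-- `ab τ ρ x = ā(x) = exp(−τ ρ̄(x))`. -/
noncomputable def ab (τ : ℝ) (ρ : ℝ → ℝ) (x : ℝ) : ℝ := Real.exp (-(τ * ρ x))

/-- The function `h₂` of the generalized AFS model, Version 2. -/
noncomputable def h2 (f : ℝ → ℝ) (τ : ℝ) (ρ : ℝ → ℝ) (x : ℝ) : ℝ :=
  x * ((f x - (ab τ ρ x) ^ 2 * f (ab τ ρ x * x) * (1 - τ * deriv ρ x * x)) /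
    (f x - ab τ ρ x * f (ab τ ρ x * x) * (1 - τ * deriv ρ x * x)))

noncomputable def h2Num (f : ℝ → ℝ) (τ : ℝ) (ρ : ℝ → ℝ) (x : ℝ) : ℝ :=
  f x - ab τ ρ x ^ 2 * f (ab τ ρ x * x) * (1 - τ * deriv ρ x * x)

noncomputable def h2Den (f : ℝ → ℝ) (τ : ℝ) (ρ : ℝ → ℝ) (x : ℝ) : ℝ :=
  f x - ab τ ρ x * f (ab τ ρ x * x) * (1 - τ * deriv ρ x * x)

noncomputable def FiGap (f : ℝ → ℝ) (τ : ℝ) (ρ : ℝ → ℝ) (x : ℝ) : ℝ :=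
  Fi f x - Fi f (ab τ ρ x * x)

theorem pos_of_continuous_of_forall_ne_zero {g : ℝ → ℝ} (hg : Continuous g)
    (hne : ∀ x, g x ≠ 0) {a : ℝ} (ha : 0 < g a) (x : ℝ) : 0 < g x := by
  by_contra! hx
  obtain ⟨c, -, hc⟩ := intermediate_value_uIcc (a := a) (b := x) hg.continuousOn
    (Set.mem_uIcc.2 (Or.inr ⟨hx, ha.le⟩))
  exact hne c hc

theorem strictMono_of_rightInverse {α β : Type*} [LinearOrder α] [Preorder β] {g : α → β}
    {h : β → α} (hg : StrictMono g) (hgh : Function.RightInverse h g) : StrictMono h :=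
  fun a b hab => hg.lt_iff_lt.mp (by rwa [hgh a, hgh b])

section Fi

variable {f : ℝ → ℝ}

theorem Fi_zero (f : ℝ → ℝ) : Fi f 0 = 0 := intervalIntegral.integral_same

theorem hasDerivAt_Fi (hf : Continuous f) (x : ℝ) : HasDerivAt (Fi f) (f x) x :=
  intervalIntegral.integral_hasDerivAt_right (hf.intervalIntegrable 0 x)
    (hf.stronglyMeasurableAtFilter _ _) hf.continuousAt

theorem Fi_strictMono (hf : Continuous f) (hfpos : ∀ x, 0 < f x) : StrictMono (Fi f) :=
  strictMono_of_deriv_pos fun x => (hasDerivAt_Fi hf x).deriv ▸ hfpos x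

end Fi

section ab

variable {τ : ℝ} {ρ : ℝ → ℝ} {x : ℝ}

theorem ab_pos (τ : ℝ) (ρ : ℝ → ℝ) (x : ℝ) : 0 < ab τ ρ x := exp_pos _

theorem ab_lt_one (hτ : 0 < τ) (hρ : 0 < ρ x) : ab τ ρ x < 1 :=
  exp_lt_one_iff.2 (neg_neg_of_pos (mul_pos hτ hρ))

theorem continuous_ab (hρ : Continuous ρ) : Continuous (ab τ ρ) :=
  (continuous_const.mul hρ).neg.rexp

theorem hasDerivAt_ab_mul_self (hρ : DifferentiableAt ℝ ρ x) :
    HasDerivAt (fun u => ab τ ρ u * u) (ab τ ρ x * (1 - τ * deriv ρ x * x)) x := by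
  have hab : HasDerivAt (ab τ ρ) (ab τ ρ x * -(τ * deriv ρ x)) x :=
    (hρ.hasDerivAt.const_mul τ).neg.exp
  exact (hab.mul (hasDerivAt_id' x)).congr_deriv (by ring)

end ab

section h2

variable {f : ℝ → ℝ} {τ : ℝ} {ρ : ℝ → ℝ}

theorem h2_eq_mul_div (x : ℝ) : h2 f τ ρ x = x * (h2Num f τ ρ x / h2Den f τ ρ x) := rfl

theorem h2_zero : h2 f τ ρ 0 = 0 := zero_mul _

theorem h2Den_zero_pos (hfpos : ∀ x, 0 < f x) (hτ : 0 < τ) (hρpos : 0 < ρ 0) :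
    0 < h2Den f τ ρ 0 := by
  have h : h2Den f τ ρ 0 = f 0 * (1 - ab τ ρ 0) := by simp only [h2Den, mul_zero]; ring
  rw [h]
  exact mul_pos (hfpos 0) (sub_pos.2 (ab_lt_one hτ hρpos))

theorem h2Den_ne_zero_of_injective (hh2 : Function.Injective (h2 f τ ρ)) {x : ℝ} (hx : x ≠ 0) :
    h2Den f τ ρ x ≠ 0 := fun hd =>
  hx (hh2 (by rw [h2_zero, h2_eq_mul_div, hd, div_zero, mul_zero]))

theorem continuous_h2Den (hf : Continuous f) (hρ : ContDiff ℝ 1 ρ) :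
    Continuous (h2Den f τ ρ) := by
  have hab := continuous_ab (τ := τ) hρ.continuous
  have hρ' := hρ.continuous_deriv le_rfl
  unfold h2Den
  fun_prop

theorem continuous_h2Num (hf : Continuous f) (hρ : ContDiff ℝ 1 ρ) :
    Continuous (h2Num f τ ρ) := by
  have hab := continuous_ab (τ := τ) hρ.continuous
  have hρ' := hρ.continuous_deriv le_rfl
  unfold h2Num
  fun_prop

theorem h2Den_pos (hf : Continuous f) (hfpos : ∀ x, 0 < f x) (hτ : 0 < τ)
    (hρ : ContDiff ℝ 1 ρ) (hρpos : ∀ x, 0 < ρ x) (hh2 : Function.Injective (h2 f τ ρ))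
    (x : ℝ) : 0 < h2Den f τ ρ x := by
  have hden0 := h2Den_zero_pos hfpos hτ (hρpos 0)
  refine pos_of_continuous_of_forall_ne_zero (continuous_h2Den hf hρ) (fun y => ?_) hden0 x
  rcases eq_or_ne y 0 with rfl | hy
  · exact hden0.ne'
  · exact h2Den_ne_zero_of_injective hh2 hy

theorem h2Den_lt_h2Num (hfpos : ∀ x, 0 < f x) (hτ : 0 < τ) {x : ℝ} (hρpos : 0 < ρ x)
    (hρ' : 0 < 1 - τ * deriv ρ x * x) : h2Den f τ ρ x < h2Num f τ ρ x := by
  have h : h2Num f τ ρ x - h2Den f τ ρ x =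
      ab τ ρ x * (1 - ab τ ρ x) * (f (ab τ ρ x * x) * (1 - τ * deriv ρ x * x)) := by
    unfold h2Num h2Den; ring
  have hpos := mul_pos (mul_pos (ab_pos τ ρ x) (sub_pos.2 (ab_lt_one hτ hρpos)))
    (mul_pos (hfpos (ab τ ρ x * x)) hρ')
  linarith

theorem h2Num_div_h2Den_pos (hf : Continuous f) (hfpos : ∀ x, 0 < f x) (hτ : 0 < τ)
    (hρ : ContDiff ℝ 1 ρ) (hρpos : ∀ x, 0 < ρ x) (hρ' : ∀ x, 0 < 1 - τ * deriv ρ x * x)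
    (hh2 : Function.Injective (h2 f τ ρ)) (x : ℝ) : 0 < h2Num f τ ρ x / h2Den f τ ρ x := by
  have hden := h2Den_pos hf hfpos hτ hρ hρpos hh2 x
  exact div_pos (hden.trans (h2Den_lt_h2Num hfpos hτ (hρpos x) (hρ' x))) hden

theorem h2_strictMono (hf : Continuous f) (hfpos : ∀ x, 0 < f x) (hτ : 0 < τ)
    (hρ : ContDiff ℝ 1 ρ) (hρpos : ∀ x, 0 < ρ x) (hρ' : ∀ x, 0 < 1 - τ * deriv ρ x * x)
    (hh2 : Function.Injective (h2 f τ ρ)) : StrictMono (h2 f τ ρ) := by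
  have hcont : Continuous (h2 f τ ρ) := continuous_id.mul <|
    (continuous_h2Num hf hρ).div (continuous_h2Den hf hρ)
      fun x => (h2Den_pos hf hfpos hτ hρ hρpos hh2 x).ne'
  have h2_one_pos : 0 < h2 f τ ρ 1 := by
    rw [h2_eq_mul_div, one_mul]
    exact h2Num_div_h2Den_pos hf hfpos hτ hρ hρpos hρ' hh2 1
  refine (hcont.strictMono_of_inj hh2).resolve_right fun hanti => ?_
  have := hanti zero_lt_one
  rw [h2_zero] at this
  exact this.not_gt h2_one_pos

end h2

section FiGap

variable {f : ℝ → ℝ} {τ : ℝ} {ρ : ℝ → ℝ}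

theorem FiGap_zero (f : ℝ → ℝ) (τ : ℝ) (ρ : ℝ → ℝ) : FiGap f τ ρ 0 = 0 := by
  simp only [FiGap, mul_zero, sub_self]

theorem hasDerivAt_FiGap (hf : Continuous f) (hρ : Differentiable ℝ ρ) (x : ℝ) :
    HasDerivAt (FiGap f τ ρ) (h2Den f τ ρ x) x := by
  have hcomp := (hasDerivAt_Fi hf (ab τ ρ x * x)).comp (h := fun u => ab τ ρ u * u) x
    (hasDerivAt_ab_mul_self (hρ x))
  exact ((hasDerivAt_Fi hf x).sub hcomp).congr_deriv (by unfold h2Den; ring)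

theorem FiGap_strictMono (hf : Continuous f) (hρ : Differentiable ℝ ρ)
    (hden : ∀ x, 0 < h2Den f τ ρ x) : StrictMono (FiGap f τ ρ) :=
  strictMono_of_deriv_pos fun x => (hasDerivAt_FiGap hf hρ x).deriv ▸ hden x

end FiGap

theorem h2hat_strictMono_unique_positive_solution_general
    (f Finv : ℝ → ℝ) (hf : Continuous f) (hfpos : ∀ x, 0 < f x)
    (hFinv₁ : ∀ x, Fi f (Finv x) = x)
    (τ : ℝ) (hτ : 0 < τ) (ρ : ℝ → ℝ) (hρ : ContDiff ℝ 1 ρ) (hρpos : ∀ x, 0 < ρ x)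
    (hρ' : ∀ x, 0 < 1 - τ * deriv ρ x * x)
    (N : ℕ) (hN : 1 ≤ N) (X₀ : ℝ) (hX₀ : 0 < X₀)
    (hh2 : Function.Injective (h2 f τ ρ)) :
    StrictMono (fun x : ℝ => h2 f τ ρ (Finv x)) ∧
    StrictMono (fun x : ℝ =>
      -Finv (X₀ - (N : ℝ) * (x - Fi f (ab τ ρ (Finv x) * Finv x)))) ∧
    (∀ a b : ℝ,
      Finv (X₀ - (N : ℝ) * (a - Fi f (ab τ ρ (Finv a) * Finv a))) = h2 f τ ρ (Finv a) →
      Finv (X₀ - (N : ℝ) * (b - Fi f (ab τ ρ (Finv b) * Finv b))) = h2 f τ ρ (Finv b) →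
      a = b) ∧
    (∀ a : ℝ,
      Finv (X₀ - (N : ℝ) * (a - Fi f (ab τ ρ (Finv a) * Finv a))) = h2 f τ ρ (Finv a) →
      0 < a) := by
  have hFi := Fi_strictMono hf hfpos
  have hFinv : StrictMono Finv := strictMono_of_rightInverse hFi hFinv₁
  have hFinv_zero : Finv 0 = 0 := hFi.injective (by rw [hFinv₁, Fi_zero])
  have hGap := FiGap_strictMono hf (hρ.differentiable one_ne_zero)
    (h2Den_pos hf hfpos hτ hρ hρpos hh2)
  have hN₀ : (0 : ℝ) < N := by exact_mod_cast hN
  have hinner (x : ℝ) : x - Fi f (ab τ ρ (Finv x) * Finv x) = FiGap f τ ρ (Finv x) := by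
    rw [FiGap, hFinv₁]
  have hmono₁ := (h2_strictMono hf hfpos hτ hρ hρpos hρ' hh2).comp hFinv
  have hmono₂ : StrictMono (fun x : ℝ =>
      -Finv (X₀ - (N : ℝ) * (x - Fi f (ab τ ρ (Finv x) * Finv x)))) := fun x y hxy => by
    simp only [hinner, neg_lt_neg_iff]
    exact hFinv (by nlinarith [hGap (hFinv hxy)])
  refine ⟨hmono₁, hmono₂, fun a b ha hb => (hmono₁.add hmono₂).injective ?_, fun a ha => ?_⟩
  · simp only [Function.comp_apply, ← ha, ← hb, add_neg_cancel]
  · by_contra! ha₀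
    have hu : Finv a ≤ 0 := hFinv_zero ▸ hFinv.monotone ha₀
    have hgap : FiGap f τ ρ (Finv a) ≤ 0 := FiGap_zero f τ ρ ▸ hGap.monotone hu
    have hlhs : 0 < Finv (X₀ - N * (a - Fi f (ab τ ρ (Finv a) * Finv a))) := by
      rw [← hFinv_zero, hinner]
      exact hFinv (by nlinarith)
    have hrhs : h2 f τ ρ (Finv a) ≤ 0 := by
      rw [h2_eq_mul_div]
      exact mul_nonpos_of_nonpos_of_nonneg hu
        (h2Num_div_h2Den_pos hf hfpos hτ hρ hρpos hρ' hh2 _).le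
    linarith

/-- Uniqueness and positivity of the first-order candidate for Version 2:
`x ↦ h₂(F⁻¹(x))` and `ĥ₂(x) = −F⁻¹(X₀ − N[x − F(ā(F⁻¹(x))F⁻¹(x))])` are strictly
increasing; hence the stationarity equation has at most one solution, which is positive. -/
theorem h2hat_strictMono_unique_positive_solution
    (f Finv : ℝ → ℝ) (hf : Continuous f) (hfpos : ∀ x, 0 < f x)
    (htop : Tendsto (Fi f) atTop atTop) (hbot : Tendsto (Fi f) atBot atBot)
    (hFinv₁ : ∀ x, Fi f (Finv x) = x) (hFinv₂ : ∀ x, Finv (Fi f x) = x)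
    (τ : ℝ) (hτ : 0 < τ) (ρ : ℝ → ℝ) (hρ : ContDiff ℝ 1 ρ) (hρpos : ∀ x, 0 < ρ x)
    (hρ' : ∀ x, 0 < 1 - τ * deriv ρ x * x)
    (N : ℕ) (hN : 1 ≤ N) (X₀ : ℝ) (hX₀ : 0 < X₀)
    (hh2 : Function.Injective (h2 f τ ρ)) :
    StrictMono (fun x : ℝ => h2 f τ ρ (Finv x)) ∧
    StrictMono (fun x : ℝ =>
      -Finv (X₀ - (N : ℝ) * (x - Fi f (ab τ ρ (Finv x) * Finv x)))) ∧
    (∀ a b : ℝ,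
      Finv (X₀ - (N : ℝ) * (a - Fi f (ab τ ρ (Finv a) * Finv a))) = h2 f τ ρ (Finv a) →
      Finv (X₀ - (N : ℝ) * (b - Fi f (ab τ ρ (Finv b) * Finv b))) = h2 f τ ρ (Finv b) →
      a = b) ∧
    (∀ a : ℝ,
      Finv (X₀ - (N : ℝ) * (a - Fi f (ab τ ρ (Finv a) * Finv a))) = h2 f τ ρ (Finv a) →
      0 < a) :=
  h2hat_strictMono_unique_positive_solution_general f Finv hf hfpos hFinv₁ τ hτ ρ hρ hρpos hρ' N hN
    X₀ hX₀ hh2
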